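/- Let ω be a weight, let 1 ≤ d₁ ≤ d be integers with d₁ ≤ d, and let z₁,…,z_d ∈ ℂ be distinct points with |z_i| = 1 for 1 ≤ i ≤ d₁ and |z_i| > 1 for d₁ < i ≤ d. Let E be the d×d matrix with entries e_{l,m} = k_{n+d}(z_l, z_m), and for 1 ≤ i ≤ d₁ let E_{i,i} denote the (i,i) cofactor of E, i.e. the determinant of E with its i-th row and i-th column removed. Then E_{i,i} · ω_{n+d}^{d−d₁} / (S_{n+d}^{d₁−1} · ∏_{l=d₁+1}^d |z_l|^{2(n+d+1)}) → det(B) as n → ∞, where B is the (d−d₁)×(d−d₁) matrix with entries b_{l,m} = 1/(z̄_m z_l − 1) for d₁+1 ≤ l, m ≤ d. -/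

import Mathlib

open Polynomial Filter Topology MeasureTheory Metric Asymptotics

noncomputable section

/-- A weight: positive, monotone, ω₀ = 1, ω_n/ω_{n-⌊√n⌋} → 1, ∑ 1/ω_k = ∞. -/
def IsWeight (ω : ℕ → ℝ) : Prop :=
  (∀ k, 0 < ω k) ∧ (Monotone ω ∨ Antitone ω) ∧ ω 0 = 1 ∧
    Filter.Tendsto (fun n => ω n / ω (n - Nat.sqrt n)) Filter.atTop (nhds 1) ∧
    ¬ Summable (fun k => 1 / ω k)

/-- Squared H²_ω norm of a polynomial. -/
def wNormSq (ω : ℕ → ℝ) (g : Polynomial ℂ) : ℝ :=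
  ∑ k ∈ Finset.range (g.natDegree + 1), ω k * ‖g.coeff k‖ ^ 2

/-- `p` is the n-th optimal polynomial approximant to `1/f` in `H²_ω`. -/
def IsOPA (ω : ℕ → ℝ) (f : Polynomial ℂ) (n : ℕ) (p : Polynomial ℂ) : Prop :=
  p.degree ≤ (n : ℕ) ∧ ∀ q : Polynomial ℂ, q.degree ≤ (n : ℕ) →
    wNormSq ω (1 - p * f) ≤ wNormSq ω (1 - q * f)

/-- Partial sums `S_N = ∑_{k=0}^N 1/ω_k`. -/
def S (ω : ℕ → ℝ) (N : ℕ) : ℝ := ∑ k ∈ Finset.range (N + 1), 1 / ω k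

/-- Truncated reproducing kernel `k_N(z,b) = ∑_{k=0}^N b̄^k z^k / ω_k`. -/
def kN (ω : ℕ → ℝ) (N : ℕ) (z b : ℂ) : ℂ :=
  ∑ k ∈ Finset.range (N + 1), (starRingEnd ℂ b) ^ k * z ^ k / (ω k : ℂ)

/-- Zero-counting probability measure of a polynomial: the average of Dirac
masses at its roots, counted with multiplicity. -/
def zeroMeasure (q : Polynomial ℂ) : Measure ℂ :=
  (q.natDegree : ENNReal)⁻¹ • (q.roots.map (fun z => Measure.dirac z)).sum

/-- Normalized arclength (uniform) measure on the unit circle. -/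
def nuT : Measure ℂ :=
  (ENNReal.ofReal (2 * Real.pi))⁻¹ •
    Measure.map (fun θ : ℝ => Complex.exp (θ * Complex.I))
      (MeasureTheory.volume.restrict (Set.Ioc 0 (2 * Real.pi)))

/-!
Put `N = n + d` and `k_N(a, 1) = ∑_{k ≤ N} a^k / ω_k`, so that `k_N(z, b) = k_N(z b̄, 1)`.
Conjugate the cofactor matrix by the diagonal matrix with entry `S_N^{-1/2}` at the unimodular
nodes and `ω_N^{1/2} / z^{N+1}` at the outer nodes; its determinant is exactly the normalisation
in the theorem, and the conjugated matrix tends to `diag(1, B)`: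
* for `|a| = 1`, `a ≠ 1`, summation by parts against `a^k` and the monotonicity of `1/ω` give
  `|k_N(a, 1)| = O(1 + 1/ω_N) = o(S_N)`, while `k_N(z, z) = S_N`;
* for `|a| > 1`, `v_N = ω_N k_N(a, 1) / a^{N+1}` satisfies
  `v_{N+1} = (ω_{N+1}/ω_N) v_N / a + 1/a`, a contraction towards `1/(a - 1)` since
  `ω_{N+1}/ω_N → 1`;
* the mixed entries carry the extra factor `(ω_N S_N)^{-1/2}`, and `ω_N S_N → ∞` because its
  last `J + 1` terms `ω_N / ω_{N-j}` each tend to `1`.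
-/

open ComplexConjugate

lemma one_sub_mul_sum_pow_mul {R : Type*} [CommRing R] (a : R) (u : ℕ → R) (N : ℕ) :
    (1 - a) * ∑ k ∈ Finset.range (N + 1), a ^ k * u k =
      u 0 - a ^ (N + 1) * u N + ∑ k ∈ Finset.range N, a ^ (k + 1) * (u (k + 1) - u k) := by
  induction N with
  | zero => simp only [zero_add, Finset.sum_range_one, Finset.sum_range_zero]; ring
  | succ N ih =>
    rw [Finset.sum_range_succ, mul_add, ih, Finset.sum_range_succ _ N]
    ring

lemma sum_range_abs_sub_of_monotone_or_antitone {u : ℕ → ℝ} (hu : Monotone u ∨ Antitone u)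
    (N : ℕ) : ∑ k ∈ Finset.range N, |u (k + 1) - u k| = |u N - u 0| := by
  rcases hu with hu | hu
  · rw [← Finset.sum_range_sub, abs_of_nonneg (Finset.sum_nonneg fun k _ =>
      sub_nonneg.2 (hu k.le_succ))]
    exact Finset.sum_congr rfl fun k _ => abs_of_nonneg (sub_nonneg.2 (hu k.le_succ))
  · rw [← Finset.sum_range_sub, abs_of_nonpos (Finset.sum_nonpos fun k _ =>
      sub_nonpos.2 (hu k.le_succ)), ← Finset.sum_neg_distrib]
    exact Finset.sum_congr rfl fun k _ => abs_of_nonpos (sub_nonpos.2 (hu k.le_succ))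

lemma tendsto_zero_of_norm_succ_le {E : Type*} [SeminormedAddCommGroup E] {w : ℕ → E}
    {ε : ℕ → ℝ} {q : ℝ} (hq0 : 0 ≤ q) (hq : q < 1) (hε : Tendsto ε atTop (𝓝 0))
    (hw : ∀ᶠ n in atTop, ‖w (n + 1)‖ ≤ q * ‖w n‖ + ε n) : Tendsto w atTop (𝓝 0) := by
  refine Metric.tendsto_atTop.2 fun η hη => ?_
  obtain ⟨K, hK⟩ := eventually_atTop.1 <| hw.and <|
    hε.eventually (gt_mem_nhds (by nlinarith : 0 < η / 2 * (1 - q)))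
  set M := max (‖w K‖ - η / 2) 0
  -- Above the level `η / 2` the excess decays geometrically.
  have hdecay : ∀ k, ‖w (K + k)‖ - η / 2 ≤ q ^ k * M := by
    intro k
    induction k with
    | zero => simp [M]
    | succ k ih =>
      obtain ⟨h1, h2⟩ := hK (K + k) (by omega)
      calc ‖w (K + (k + 1))‖ - η / 2 ≤ q * (‖w (K + k)‖ - η / 2) := by
            rw [← add_assoc]; nlinarith
        _ ≤ q * (q ^ k * M) := mul_le_mul_of_nonneg_left ih hq0
        _ = q ^ (k + 1) * M := by ring
  have hpow : Tendsto (fun k => q ^ k * M) atTop (𝓝 0) := by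
    simpa using (tendsto_pow_atTop_nhds_zero_of_lt_one hq0 hq).mul_const M
  obtain ⟨k₀, hk₀⟩ := eventually_atTop.1 (hpow.eventually (gt_mem_nhds (half_pos hη)))
  refine ⟨K + k₀, fun n hn => ?_⟩
  obtain ⟨k, rfl⟩ := Nat.exists_eq_add_of_le (le_trans (Nat.le_add_right K k₀) hn)
  rw [dist_zero_right]
  linarith [hdecay k, hk₀ k (by omega)]

lemma mul_conj_eq_one_iff {u v : ℂ} (hv : ‖v‖ = 1) : u * conj v = 1 ↔ u = v := by
  refine ⟨fun h => ?_, fun h => by rw [h, Complex.mul_conj', hv]; simp⟩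
  have : u * (conj v * v) = v := by rw [← mul_assoc, h, one_mul]
  rwa [mul_comm (conj v), Complex.mul_conj', hv, Complex.ofReal_one, one_pow, mul_one] at this

lemma Matrix.det_diagonal_mul_mul_diagonal_star {ι : Type*} [Fintype ι] [DecidableEq ι]
    (c : ι → ℂ) (A : Matrix ι ι ℂ) :
    (Matrix.diagonal c * A * Matrix.diagonal (star c)).det =
      A.det * ((∏ s, ‖c s‖ ^ 2 : ℝ) : ℂ) := by
  rw [Matrix.det_mul, Matrix.det_mul, Matrix.det_diagonal, Matrix.det_diagonal, mul_comm _ A.det,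
    mul_assoc, ← Finset.prod_mul_distrib]
  push_cast
  simp only [Pi.star_apply, Complex.star_def, Complex.mul_conj']

lemma Finset.prod_Icc_add_one_eq_prod_fin {M : Type*} [CommMonoid M] (f : ℕ → M) (a b : ℕ) :
    ∏ l ∈ Finset.Icc (a + 1) b, f l = ∏ l : Fin (b - a), f (l + 1 + a) := by
  rw [← Finset.Ico_add_one_right_eq_Icc, Finset.prod_Ico_eq_prod_range, Nat.add_sub_add_right,
    ← Fin.prod_univ_eq_prod_range]
  exact Finset.prod_congr rfl fun l _ => by congr 1; omega

lemma kN_eq_kN_mul_conj (ω : ℕ → ℝ) (N : ℕ) (z b : ℂ) : kN ω N z b = kN ω N (z * conj b) 1 := by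
  simp only [kN, map_one, one_pow, one_mul, mul_pow, mul_comm]

lemma conj_kN (ω : ℕ → ℝ) (N : ℕ) (z b : ℂ) : conj (kN ω N z b) = kN ω N b z := by
  simp [kN, map_sum, mul_comm]

lemma kN_one_succ (ω : ℕ → ℝ) (N : ℕ) (a : ℂ) :
    kN ω (N + 1) a 1 = kN ω N a 1 + a ^ (N + 1) / ω (N + 1) := by
  simp [kN, Finset.sum_range_succ _ (N + 1)]

lemma kN_self_of_norm_eq_one (ω : ℕ → ℝ) (N : ℕ) {x : ℂ} (hx : ‖x‖ = 1) :
    kN ω N x x = S ω N := by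
  rw [kN_eq_kN_mul_conj, Complex.mul_conj', hx]
  simp [kN, S]

namespace IsWeight

variable {ω : ℕ → ℝ}

lemma pos (hω : IsWeight ω) (k : ℕ) : 0 < ω k := hω.1 k

lemma one_le_S (hω : IsWeight ω) (N : ℕ) : 1 ≤ S ω N := by
  have h : 1 / ω 0 = 1 := by rw [hω.2.2.1, div_one]
  rw [← h, S]
  exact Finset.single_le_sum (f := fun k => 1 / ω k) (fun k _ => (one_div_pos.2 (hω.pos k)).le)
    (by simp)

lemma S_pos (hω : IsWeight ω) (N : ℕ) : 0 < S ω N := one_pos.trans_le (hω.one_le_S N)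

lemma tendsto_S_atTop (hω : IsWeight ω) : Tendsto (S ω) atTop atTop :=
  ((not_summable_iff_tendsto_nat_atTop_of_nonneg fun k => (one_div_pos.2 (hω.pos k)).le).1
    hω.2.2.2.2).comp (tendsto_add_atTop_nat 1)

lemma tendsto_div_sub (hω : IsWeight ω) (j : ℕ) :
    Tendsto (fun N => ω N / ω (N - j)) atTop (𝓝 1) := by
  have hrat := hω.2.2.2.1
  have hj : ∀ᶠ N : ℕ in atTop, j ≤ Nat.sqrt N := by
    filter_upwards [eventually_ge_atTop (j * j)] with N hN
    simpa [Nat.sqrt_eq] using Nat.sqrt_le_sqrt hN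
  rcases hω.2.1 with hm | hm
  · refine tendsto_of_tendsto_of_tendsto_of_le_of_le' tendsto_const_nhds hrat ?_ ?_
    · exact Eventually.of_forall fun N =>
        (one_le_div (hω.pos _)).2 (hm (Nat.sub_le N j))
    · filter_upwards [hj] with N hN
      exact div_le_div_of_nonneg_left (hω.pos N).le (hω.pos _) (hm (by omega))
  · refine tendsto_of_tendsto_of_tendsto_of_le_of_le' hrat tendsto_const_nhds ?_ ?_
    · filter_upwards [hj] with N hN
      exact div_le_div_of_nonneg_left (hω.pos N).le (hω.pos _) (hm (by omega))
    · exact Eventually.of_forall fun N =>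
        (div_le_one (hω.pos _)).2 (hm (Nat.sub_le N j))

lemma tendsto_succ_div (hω : IsWeight ω) :
    Tendsto (fun N => ω (N + 1) / ω N) atTop (𝓝 1) :=
  (hω.tendsto_div_sub 1).comp (tendsto_add_atTop_nat 1)

lemma tendsto_mul_S_atTop (hω : IsWeight ω) :
    Tendsto (fun N => ω N * S ω N) atTop atTop := by
  refine tendsto_atTop.2 fun b => ?_
  obtain ⟨J, hJ⟩ := exists_nat_gt b
  have htail : Tendsto (fun N => ∑ j ∈ Finset.range (J + 1), ω N / ω (N - j)) atTop
      (𝓝 (J + 1 : ℝ)) := by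
    simpa using tendsto_finsetSum (Finset.range (J + 1)) fun j _ => hω.tendsto_div_sub j
  filter_upwards [htail.eventually (eventually_ge_nhds (by linarith : b < (J + 1 : ℝ))),
    eventually_ge_atTop J] with N hN hJN
  calc b ≤ ∑ j ∈ Finset.range (J + 1), ω N * (1 / ω (N + 1 - 1 - j)) := by
        simpa only [Nat.add_sub_cancel, mul_one_div] using hN
    _ ≤ ∑ j ∈ Finset.range (N + 1), ω N * (1 / ω (N + 1 - 1 - j)) :=
        Finset.sum_le_sum_of_subset_of_nonneg (Finset.range_subset_range.2 (by omega))
          fun j _ _ => (mul_pos (hω.pos N) (one_div_pos.2 (hω.pos _))).le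
    _ = ω N * S ω N := by
        rw [Finset.sum_range_reflect (fun k => ω N * (1 / ω k)), ← Finset.mul_sum, S]

lemma norm_one_sub_mul_kN_le (hω : IsWeight ω) {a : ℂ} (ha : ‖a‖ = 1) (N : ℕ) :
    ‖1 - a‖ * ‖kN ω N a 1‖ ≤ 2 * (1 + (ω N)⁻¹) := by
  have hu : Monotone (fun k => (ω k)⁻¹) ∨ Antitone (fun k => (ω k)⁻¹) := by
    rcases hω.2.1 with hm | hm
    · exact .inr fun m n h => inv_anti₀ (hω.pos m) (hm h)
    · exact .inl fun m n h => inv_anti₀ (hω.pos n) (hm h)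
  have hkN : kN ω N a 1 = ∑ k ∈ Finset.range (N + 1), a ^ k * ((ω k)⁻¹ : ℝ) := by
    simp [kN, div_eq_mul_inv]
  have hω0 : (ω 0)⁻¹ = 1 := by rw [hω.2.2.1, inv_one]
  have hωN : 0 < (ω N)⁻¹ := inv_pos.2 (hω.pos N)
  rw [← norm_mul, hkN, one_sub_mul_sum_pow_mul]
  calc _ ≤ ‖(((ω 0)⁻¹ : ℝ) : ℂ)‖ + ‖a ^ (N + 1) * (((ω N)⁻¹ : ℝ) : ℂ)‖ +
        ∑ k ∈ Finset.range N, ‖a ^ (k + 1) * ((((ω (k + 1))⁻¹ : ℝ) : ℂ) - ((ω k)⁻¹ : ℝ))‖ :=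
        (norm_add_le _ _).trans (add_le_add (norm_sub_le _ _) (norm_sum_le _ _))
    _ = 1 + (ω N)⁻¹ + |(ω N)⁻¹ - (ω 0)⁻¹| := by
        rw [← sum_range_abs_sub_of_monotone_or_antitone hu]
        simp only [norm_mul, norm_pow, ha, one_pow, one_mul, ← Complex.ofReal_sub,
          Complex.norm_real, Real.norm_eq_abs, hω0, abs_one, abs_of_pos hωN]
    _ ≤ 2 * (1 + (ω N)⁻¹) := by
        have h := abs_sub (ω N)⁻¹ 1
        rw [abs_of_pos hωN, abs_one] at h
        rw [hω0]
        linarith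

lemma tendsto_kN_div_S (hω : IsWeight ω) {a : ℂ} (ha : ‖a‖ = 1) (ha1 : a ≠ 1) :
    Tendsto (fun N => kN ω N a 1 / S ω N) atTop (𝓝 0) := by
  have hlim : Tendsto (fun N => 2 / ‖1 - a‖ * ((S ω N)⁻¹ + (ω N * S ω N)⁻¹)) atTop (𝓝 0) := by
    simpa using (hω.tendsto_S_atTop.inv_tendsto_atTop.add
      hω.tendsto_mul_S_atTop.inv_tendsto_atTop).const_mul (2 / ‖1 - a‖)
  refine squeeze_zero_norm (fun N => ?_) hlim
  have h1a : 0 < ‖1 - a‖ := norm_pos_iff.2 (sub_ne_zero.2 ha1.symm)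
  have hS := hω.S_pos N
  have hbound := hω.norm_one_sub_mul_kN_le ha N
  rw [norm_div, Complex.norm_real, Real.norm_eq_abs, abs_of_pos hS, div_le_iff₀ hS]
  calc ‖kN ω N a 1‖ ≤ 2 * (1 + (ω N)⁻¹) / ‖1 - a‖ := by rwa [le_div_iff₀' h1a]
    _ = _ := by field_simp

lemma tendsto_mul_kN_div_pow (hω : IsWeight ω) {a : ℂ} (ha : 1 < ‖a‖) :
    Tendsto (fun N => ω N * kN ω N a 1 / a ^ (N + 1)) atTop (𝓝 (1 / (a - 1))) := by
  have ha0 : a ≠ 0 := by rintro rfl; norm_num at ha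
  have ha1 : a - 1 ≠ 0 := by rintro h; rw [sub_eq_zero.1 h, norm_one] at ha; exact ha.false
  set ρ : ℕ → ℝ := fun N => ω (N + 1) / ω N
  set q : ℝ := (1 + ‖a‖) / (2 * ‖a‖)
  have hrec : ∀ N, ω (N + 1) * kN ω (N + 1) a 1 / a ^ (N + 1 + 1) - 1 / (a - 1) =
      ρ N / a * (ω N * kN ω N a 1 / a ^ (N + 1) - 1 / (a - 1)) + (ρ N - 1) / (a * (a - 1)) := by
    intro N
    have hωN : (ω N : ℂ) ≠ 0 := Complex.ofReal_ne_zero.2 (hω.pos N).ne'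
    have hωN1 : (ω (N + 1) : ℂ) ≠ 0 := Complex.ofReal_ne_zero.2 (hω.pos (N + 1)).ne'
    simp only [ρ, kN_one_succ, Complex.ofReal_div]
    field_simp
    ring
  rw [← tendsto_sub_nhds_zero_iff]
  refine tendsto_zero_of_norm_succ_le (q := q) (ε := fun N => |ρ N - 1| / ‖a * (a - 1)‖)
    (by positivity) ((div_lt_one (by positivity)).2 (by linarith))
    (by simpa using ((hω.tendsto_succ_div.sub_const 1).abs).div_const ‖a * (a - 1)‖) ?_
  filter_upwards [hω.tendsto_succ_div.eventually (ge_mem_nhds (by linarith : 1 < (1 + ‖a‖) / 2))]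
    with N hN
  have hρ : 0 < ρ N := div_pos (hω.pos _) (hω.pos _)
  rw [hrec]
  refine (norm_add_le _ _).trans (add_le_add ?_ ?_)
  · rw [norm_mul, norm_div, Complex.norm_real, Real.norm_eq_abs, abs_of_pos hρ]
    refine mul_le_mul_of_nonneg_right ?_ (norm_nonneg _)
    rw [div_le_div_iff₀ (by linarith) (by linarith)]
    nlinarith
  · rw [norm_div, ← Complex.ofReal_one, ← Complex.ofReal_sub, Complex.norm_real, Real.norm_eq_abs]

lemma tendsto_pow_div_sqrt_mul_S (hω : IsWeight ω) {u : ℂ} (hu : ‖u‖ = 1) :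
    Tendsto (fun N => u ^ (N + 1) / (√(ω N * S ω N) : ℂ)) atTop (𝓝 0) := by
  refine squeeze_zero_norm (fun N => ?_)
    (Real.tendsto_sqrt_atTop.comp hω.tendsto_mul_S_atTop).inv_tendsto_atTop
  simp [hu, abs_of_nonneg (Real.sqrt_nonneg _)]

lemma tendsto_scaled_kN_of_norm_eq_one (hω : IsWeight ω) {u v : ℂ} (hu : ‖u‖ = 1)
    (hv : ‖v‖ = 1) :
    Tendsto (fun N => (√(S ω N) : ℂ)⁻¹ * kN ω N u v * conj (√(S ω N) : ℂ)⁻¹) atTop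
      (𝓝 (if u = v then 1 else 0)) := by
  have hscale : ∀ N,
      (√(S ω N) : ℂ)⁻¹ * kN ω N u v * conj (√(S ω N) : ℂ)⁻¹ = kN ω N u v / S ω N := by
    intro N
    rw [map_inv₀, Complex.conj_ofReal, mul_comm, ← mul_assoc, ← mul_inv, ← Complex.ofReal_mul,
      Real.mul_self_sqrt (hω.S_pos N).le, div_eq_inv_mul]
  simp only [hscale]
  split_ifs with huv
  · subst huv
    refine tendsto_const_nhds.congr fun N => ?_
    rw [kN_self_of_norm_eq_one ω N hu, div_self (Complex.ofReal_ne_zero.2 (hω.S_pos N).ne')]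
  · simp only [kN_eq_kN_mul_conj ω _ u v]
    refine hω.tendsto_kN_div_S (by simp [hu, hv]) fun h => huv ((mul_conj_eq_one_iff hv).1 h)

lemma tendsto_scaled_kN_of_norm_eq_one_of_one_lt (hω : IsWeight ω) {u v : ℂ} (hu : ‖u‖ = 1)
    (hv : 1 < ‖v‖) :
    Tendsto (fun N => (√(S ω N) : ℂ)⁻¹ * kN ω N u v * conj ((√(ω N) : ℂ) / v ^ (N + 1)))
      atTop (𝓝 0) := by
  have huv : 1 < ‖u * conj v‖ := by simpa [hu] using hv
  have hu0 : u ≠ 0 := by rintro rfl; norm_num at hu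
  have hv0 : conj v ≠ 0 := by rw [_root_.map_ne_zero]; rintro rfl; norm_num at hv
  have h := (hω.tendsto_mul_kN_div_pow huv).mul (hω.tendsto_pow_div_sqrt_mul_S hu)
  rw [mul_zero] at h
  refine h.congr fun N => ?_
  have hω0 : (√(ω N) : ℂ) ≠ 0 := Complex.ofReal_ne_zero.2 (Real.sqrt_pos.2 (hω.pos N)).ne'
  have hS0 : (√(S ω N) : ℂ) ≠ 0 := Complex.ofReal_ne_zero.2 (Real.sqrt_pos.2 (hω.S_pos N)).ne'
  have hsq : (ω N : ℂ) = √(ω N) * √(ω N) := by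
    rw [← Complex.ofReal_mul, Real.mul_self_sqrt (hω.pos N).le]
  rw [kN_eq_kN_mul_conj ω N u v, Real.sqrt_mul (hω.pos N).le, hsq, map_div₀, Complex.conj_ofReal,
    map_pow]
  push_cast
  field_simp
  ring

lemma tendsto_scaled_kN_of_one_lt (hω : IsWeight ω) {u v : ℂ} (hu : 1 < ‖u‖) (hv : 1 < ‖v‖) :
    Tendsto (fun N => (√(ω N) : ℂ) / u ^ (N + 1) * kN ω N u v * conj ((√(ω N) : ℂ) / v ^ (N + 1)))
      atTop (𝓝 (1 / (conj v * u - 1))) := by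
  have huv : 1 < ‖u * conj v‖ := by
    rw [norm_mul, Complex.norm_conj]; nlinarith
  have hu0 : u ≠ 0 := by rintro rfl; norm_num at hu
  have hv0 : conj v ≠ 0 := by rw [_root_.map_ne_zero]; rintro rfl; norm_num at hv
  rw [mul_comm (conj v)]
  refine (hω.tendsto_mul_kN_div_pow huv).congr fun N => ?_
  have hsq : (ω N : ℂ) = √(ω N) * √(ω N) := by
    rw [← Complex.ofReal_mul, Real.mul_self_sqrt (hω.pos N).le]
  rw [kN_eq_kN_mul_conj ω N u v, hsq, map_div₀, Complex.conj_ofReal, map_pow]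
  field_simp
  ring

end IsWeight

section KernelMatrix

variable {ι κ : Type*} [Fintype ι] [Fintype κ] [DecidableEq ι] [DecidableEq κ] {ω : ℕ → ℝ}

def kernelMatrix (ω : ℕ → ℝ) (N : ℕ) (p : ι → ℂ) : Matrix ι ι ℂ :=
  Matrix.of fun s t => kN ω N (p s) (p t)

def kernelScaling (ω : ℕ → ℝ) (N : ℕ) (y : κ → ℂ) : ι ⊕ κ → ℂ :=
  Sum.elim (fun _ => (√(S ω N) : ℂ)⁻¹) fun l => (√(ω N) : ℂ) / y l ^ (N + 1)

lemma IsWeight.det_scaled_kernelMatrix (hω : IsWeight ω) (N : ℕ) (x : ι → ℂ) (y : κ → ℂ) :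
    (Matrix.diagonal (kernelScaling ω N y) * kernelMatrix ω N (Sum.elim x y) *
        Matrix.diagonal (star (kernelScaling ω N y))).det =
      (kernelMatrix ω N (Sum.elim x y)).det * (ω N : ℂ) ^ Fintype.card κ /
        ((S ω N : ℂ) ^ Fintype.card ι * ∏ l, (‖y l‖ : ℂ) ^ (2 * (N + 1))) := by
  rw [Matrix.det_diagonal_mul_mul_diagonal_star, mul_div_assoc]
  congr 1
  simp only [Fintype.prod_sum_type, kernelScaling, Sum.elim_inl, Sum.elim_inr, norm_inv, norm_div,
    norm_pow, Complex.norm_real, Real.norm_eq_abs, abs_of_nonneg (Real.sqrt_nonneg _), inv_pow,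
    div_pow, Real.sq_sqrt (hω.S_pos N).le, Real.sq_sqrt (hω.pos N).le, Finset.prod_const,
    Finset.card_univ, Finset.prod_div_distrib, ← pow_mul']
  push_cast
  field_simp

lemma IsWeight.tendsto_scaled_kernelMatrix (hω : IsWeight ω) {x : ι → ℂ}
    (hx : ∀ l, ‖x l‖ = 1) (hx_inj : Function.Injective x) {y : κ → ℂ} (hy : ∀ l, 1 < ‖y l‖) :
    Tendsto (fun N => Matrix.diagonal (kernelScaling ω N y) * kernelMatrix ω N (Sum.elim x y) *
        Matrix.diagonal (star (kernelScaling ω N y))) atTop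
      (𝓝 (Matrix.fromBlocks 1 0 0 (Matrix.of fun l m => 1 / (conj (y m) * y l - 1)))) := by
  refine tendsto_pi_nhds.2 fun s => tendsto_pi_nhds.2 fun t => ?_
  simp only [Matrix.mul_diagonal, Matrix.diagonal_mul, kernelMatrix, Matrix.of_apply,
    Pi.star_apply, Complex.star_def]
  rcases s with a | a <;> rcases t with b | b <;>
    simp only [kernelScaling, Sum.elim_inl, Sum.elim_inr, Matrix.fromBlocks_apply₁₁,
      Matrix.fromBlocks_apply₁₂, Matrix.fromBlocks_apply₂₁, Matrix.fromBlocks_apply₂₂,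
      Matrix.zero_apply, Matrix.of_apply]
  · simpa only [Matrix.one_apply, hx_inj.eq_iff] using
      hω.tendsto_scaled_kN_of_norm_eq_one (hx a) (hx b)
  · exact hω.tendsto_scaled_kN_of_norm_eq_one_of_one_lt (hx a) (hy b)
  -- This entry is the complex conjugate of the transposed one.
  · have h := (Complex.continuous_conj.tendsto 0).comp
      (hω.tendsto_scaled_kN_of_norm_eq_one_of_one_lt (hx b) (hy a))
    rw [map_zero] at h
    refine h.congr fun N => ?_
    simp only [Function.comp_apply, map_mul, Complex.conj_conj, conj_kN, map_inv₀,
      Complex.conj_ofReal]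
    ring
  · exact hω.tendsto_scaled_kN_of_one_lt (hy a) (hy b)

theorem IsWeight.tendsto_det_kernelMatrix (hω : IsWeight ω) {x : ι → ℂ}
    (hx : ∀ l, ‖x l‖ = 1) (hx_inj : Function.Injective x) {y : κ → ℂ} (hy : ∀ l, 1 < ‖y l‖) :
    Tendsto (fun N => (kernelMatrix ω N (Sum.elim x y)).det * (ω N : ℂ) ^ Fintype.card κ /
        ((S ω N : ℂ) ^ Fintype.card ι * ∏ l, (‖y l‖ : ℂ) ^ (2 * (N + 1)))) atTop
      (𝓝 (Matrix.of fun l m => 1 / (conj (y m) * y l - 1)).det) := by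
  have h := (continuous_id'.matrix_det.tendsto _).comp
    (hω.tendsto_scaled_kernelMatrix hx hx_inj hy)
  rw [Matrix.det_fromBlocks_zero₂₁, Matrix.det_one, one_mul] at h
  exact h.congr fun N => hω.det_scaled_kernelMatrix N x y

end KernelMatrix

/-- `l ↦ if l + 1 < i then l + 1 else l + 2` enumerates `{1, …, d} \ {i}`; for `i ≤ d₁` its first
`d₁ - 1` values are the nodes `≤ d₁`. -/
lemma det_cofactor_eq_det_kernelMatrix (ω : ℕ → ℝ) (N : ℕ) (z : ℕ → ℂ) {d d₁ i : ℕ}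
    (hd₁ : 1 ≤ d₁) (hd : d₁ ≤ d) (hi : i ≤ d₁) :
    (Matrix.of fun l m : Fin (d - 1) =>
        kN ω N (z (if (l : ℕ) + 1 < i then (l : ℕ) + 1 else (l : ℕ) + 2))
          (z (if (m : ℕ) + 1 < i then (m : ℕ) + 1 else (m : ℕ) + 2))).det =
      (kernelMatrix ω N (Sum.elim
        (fun l : Fin (d₁ - 1) => z (if (l : ℕ) + 1 < i then (l : ℕ) + 1 else (l : ℕ) + 2))
        fun l : Fin (d - d₁) => z (l + 1 + d₁))).det := by
  let e : Fin (d₁ - 1) ⊕ Fin (d - d₁) ≃ Fin (d - 1) := finSumFinEquiv.trans (finCongr (by omega))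
  have hnode : ∀ s, z (if (e s : ℕ) + 1 < i then (e s : ℕ) + 1 else (e s : ℕ) + 2) =
      Sum.elim (fun l : Fin (d₁ - 1) => z (if (l : ℕ) + 1 < i then (l : ℕ) + 1 else (l : ℕ) + 2))
        (fun l : Fin (d - d₁) => z (l + 1 + d₁)) s := by
    rintro (l | l)
    · simp [e]
    · simp only [e, Equiv.trans_apply, finSumFinEquiv_apply_right, finCongr_apply, Fin.val_cast,
        Fin.val_natAdd, Sum.elim_inr]
      rw [if_neg (by omega)]
      congr 1
      omega
  rw [← Matrix.det_submatrix_equiv_self e]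
  congr 1
  ext s t
  simp only [Matrix.submatrix_apply, Matrix.of_apply, kernelMatrix, hnode]

theorem cofactor_asymptotics_general
    (ω : ℕ → ℝ) (hω : IsWeight ω) (d d₁ : ℕ) (hd₁ : 1 ≤ d₁) (hd : d₁ ≤ d)
    (z : ℕ → ℂ) (hinj : Set.InjOn z (Set.Icc 1 d))
    (hcirc : ∀ i, 1 ≤ i → i ≤ d₁ → ‖z i‖ = 1)
    (hout : ∀ i, d₁ < i → i ≤ d → 1 < ‖z i‖)
    (i : ℕ) (hi2 : i ≤ d₁) :
    Filter.Tendsto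
      (fun n =>
        (Matrix.det (Matrix.of fun l m : Fin (d - 1) =>
          kN ω (n + d) (z (if (l : ℕ) + 1 < i then (l : ℕ) + 1 else (l : ℕ) + 2))
            (z (if (m : ℕ) + 1 < i then (m : ℕ) + 1 else (m : ℕ) + 2)))) *
          ((ω (n + d) : ℂ)) ^ (d - d₁) /
          (((S ω (n + d) : ℝ) : ℂ) ^ (d₁ - 1) *
            ∏ l ∈ Finset.Icc (d₁ + 1) d, ((‖z l‖ : ℂ)) ^ (2 * (n + d + 1))))
      Filter.atTop
      (nhds (Matrix.det (Matrix.of fun l m : Fin (d - d₁) =>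
        1 / (starRingEnd ℂ (z ((m : ℕ) + 1 + d₁)) * z ((l : ℕ) + 1 + d₁) - 1)))) := by
  set idx : Fin (d₁ - 1) → ℕ := fun l => if (l : ℕ) + 1 < i then (l : ℕ) + 1 else (l : ℕ) + 2
  have hidx : ∀ l, 1 ≤ idx l ∧ idx l ≤ d₁ := fun l => by
    have := l.isLt; simp only [idx]; split_ifs <;> omega
  have hx : ∀ l, ‖z (idx l)‖ = 1 := fun l => hcirc _ (hidx l).1 (hidx l).2
  have hx_inj : Function.Injective (z ∘ idx) := fun l m h => by
    have h := hinj ⟨(hidx l).1, (hidx l).2.trans hd⟩ ⟨(hidx m).1, (hidx m).2.trans hd⟩ h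
    simp only [idx] at h
    exact Fin.ext (by split_ifs at h <;> omega)
  have hy : ∀ l : Fin (d - d₁), 1 < ‖z (l + 1 + d₁)‖ := fun l => hout _ (by omega) (by omega)
  refine ((hω.tendsto_det_kernelMatrix hx hx_inj hy).comp (tendsto_add_atTop_nat d)).congr
    fun n => ?_
  simp only [Function.comp_apply, Fintype.card_fin, Finset.prod_Icc_add_one_eq_prod_fin,
    det_cofactor_eq_det_kernelMatrix ω _ z hd₁ hd hi2]
  rfl

/-- Asymptotics of the diagonal cofactors `E_{i,i}` of the Gram matrix. -/
theorem cofactor_asymptotics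
    (ω : ℕ → ℝ) (hω : IsWeight ω) (d d₁ : ℕ) (hd₁ : 1 ≤ d₁) (hd : d₁ ≤ d)
    (z : ℕ → ℂ) (hinj : Set.InjOn z (Set.Icc 1 d))
    (hcirc : ∀ i, 1 ≤ i → i ≤ d₁ → ‖z i‖ = 1)
    (hout : ∀ i, d₁ < i → i ≤ d → 1 < ‖z i‖)
    (i : ℕ) (hi1 : 1 ≤ i) (hi2 : i ≤ d₁) :
    Filter.Tendsto
      (fun n =>
        (Matrix.det (Matrix.of fun l m : Fin (d - 1) =>
          kN ω (n + d) (z (if (l : ℕ) + 1 < i then (l : ℕ) + 1 else (l : ℕ) + 2))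
            (z (if (m : ℕ) + 1 < i then (m : ℕ) + 1 else (m : ℕ) + 2)))) *
          ((ω (n + d) : ℂ)) ^ (d - d₁) /
          (((S ω (n + d) : ℝ) : ℂ) ^ (d₁ - 1) *
            ∏ l ∈ Finset.Icc (d₁ + 1) d, ((‖z l‖ : ℂ)) ^ (2 * (n + d + 1))))
      Filter.atTop
      (nhds (Matrix.det (Matrix.of fun l m : Fin (d - d₁) =>
        1 / (starRingEnd ℂ (z ((m : ℕ) + 1 + d₁)) * z ((l : ℕ) + 1 + d₁) - 1)))) :=
  cofactor_asymptotics_general ω hω d d₁ hd₁ hd z hinj hcirc hout i hi2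

end
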